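/- arXiv:1412.4329 — 5 statements merged into one kernel-verified Lean document; each statement's English description precedes it below -/
import Mathlib

section
/- Let the LP data be c ∈ ℝ^n, G ∈ ℝ^{m×n}, d ∈ ℝ^m (no equality constraints), with g(x) = Gx + d. Given λ ≥ 0 and a point x' with ∇L(x', λ) = c + (2μ I_λ(x') g(x') + λ)ᵀG = 0, set λ' = max(0, λ + 2μ g(x')). Let x* satisfy ∇L(x*, λ') = 0. If (a) for all i, λᵢ > 0 implies λ'ᵢ > 0, and (b) the rows of G indexed by {i : λ'ᵢ > 0 ∨ gᵢ(x*) ≥ 0} are linearly independent, then I_{λ'}(x*) g(x*) = 0, and the KKT conditions hold at (x*, λ'). -/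
/-- Theorem 1 of the paper (inequality-only case): one centered update of the
dual parameters followed by one centering yields a KKT point, provided no
active constraint becomes inactive and the active rows are independent. -/
theorem stmt_5 {n m : ℕ} (c : Fin n → ℝ)
    (G : Matrix (Fin m) (Fin n) ℝ) (d : Fin m → ℝ)
    (mu : ℝ) (hmu : mu > 0)
    (g : (Fin n → ℝ) → Fin m → ℝ) (hg : g = fun x => G.mulVec x + d)
    (lam : Fin m → ℝ) (hlam : ∀ i, lam i ≥ 0)
    (x' xs : Fin n → ℝ) (lam' : Fin m → ℝ)
    (hlam' : lam' = fun i => max 0 (lam i + 2 * mu * g x' i))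
    (hgrad' : c + Matrix.vecMul
      (fun i => 2 * mu * (if g x' i ≥ 0 ∨ lam i > 0 then (1:ℝ) else 0) * g x' i + lam i) G = 0)
    (hgrads : c + Matrix.vecMul
      (fun i => 2 * mu * (if g xs i ≥ 0 ∨ lam' i > 0 then (1:ℝ) else 0) * g xs i + lam' i) G = 0)
    (ha : ∀ i, lam i > 0 → lam' i > 0)
    (hb : LinearIndependent ℝ (fun i : {i : Fin m // lam' i > 0 ∨ g xs i ≥ 0} => G i.1)) :
    (∀ i, (if g xs i ≥ 0 ∨ lam' i > 0 then (1:ℝ) else 0) * g xs i = 0) ∧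
    (c + Matrix.vecMul lam' G = 0) ∧
    (∀ i, g xs i ≤ 0) ∧ (∀ i, lam' i ≥ 0) ∧ (∀ i, lam' i * g xs i = 0) := by
  classical
  have hlamnn : ∀ i, lam' i ≥ 0 := by
    intro i; rw [hlam']; exact le_max_left _ _
  -- Step 1: the multipliers at x' coincide with lam'
  have hkey : (fun i => 2 * mu * (if g x' i ≥ 0 ∨ lam i > 0 then (1:ℝ) else 0) * g x' i + lam i)
      = lam' := by
    funext i
    by_cases h : g x' i ≥ 0 ∨ lam i > 0
    · simp only [if_pos h, mul_one]
      rw [hlam']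
      have hpos : 0 ≤ lam i + 2 * mu * g x' i := by
        rcases h with h | h
        · have := hlam i; nlinarith
        · have h2 := ha i h
          rw [hlam'] at h2
          simp only at h2
          by_contra hc
          push_neg at hc
          rw [max_eq_left hc.le] at h2
          exact lt_irrefl _ h2
      simp [max_eq_right hpos]; ring
    · push_neg at h
      obtain ⟨h1, h2⟩ := h
      have hl0 : lam i = 0 := le_antisymm h2 (hlam i)
      rw [if_neg (show ¬(g x' i ≥ 0 ∨ lam i > 0) by push_neg; exact ⟨h1, h2⟩), hlam']
      have h3 : 2 * mu * g x' i < 0 := by nlinarith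
      rw [hl0]
      simp only [zero_mul, mul_zero, zero_add]
      exact (max_eq_left (by linarith)).symm
  have hKKT : c + Matrix.vecMul lam' G = 0 := by rw [← hkey]; exact hgrad'
  -- Step 2: subtract to get residual vecMul = 0
  set u : Fin m → ℝ := fun i => 2 * mu * (if g xs i ≥ 0 ∨ lam' i > 0 then (1:ℝ) else 0) * g xs i
    with hu
  have hsplit : (fun i => 2 * mu * (if g xs i ≥ 0 ∨ lam' i > 0 then (1:ℝ) else 0) * g xs i + lam' i)
      = u + lam' := by funext i; rfl
  rw [hsplit, Matrix.add_vecMul] at hgrads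
  have huG : Matrix.vecMul u G = 0 := by
    have : Matrix.vecMul u G = (c + (Matrix.vecMul u G + Matrix.vecMul lam' G))
        - (c + Matrix.vecMul lam' G) := by abel
    rw [this, hgrads, hKKT]; simp
  -- Step 3: express as sum and use linear independence
  have hsum : ∑ i : Fin m, u i • G i = 0 := by
    funext j
    have := congrFun huG j
    simp only [Matrix.vecMul, dotProduct] at this
    simpa [Finset.sum_apply, Pi.smul_apply, smul_eq_mul] using this
  have hzero : ∀ i, (lam' i > 0 ∨ g xs i ≥ 0) → g xs i = 0 := by
    intro i hi
    have hres : ∑ j : {i : Fin m // lam' i > 0 ∨ g xs i ≥ 0}, u j.1 • G j.1 = 0 := by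
      rw [← hsum]
      rw [← Finset.sum_subtype (Finset.univ.filter (fun i => lam' i > 0 ∨ g xs i ≥ 0))
        (by simp) (fun i => u i • G i)]
      apply Finset.sum_subset (Finset.filter_subset _ _)
      intro x _ hx
      simp only [Finset.mem_filter, Finset.mem_univ, true_and] at hx
      have : ¬(g xs x ≥ 0 ∨ lam' x > 0) := by tauto
      simp [hu, if_neg this]
    have := Fintype.linearIndependent_iff.mp hb (fun j => u j.1) hres ⟨i, hi⟩
    have hind : (if g xs i ≥ 0 ∨ lam' i > 0 then (1:ℝ) else 0) = 1 := if_pos (by tauto)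
    rw [hu] at this
    simp only [hind, mul_one] at this
    nlinarith
  refine ⟨?_, hKKT, ?_, hlamnn, ?_⟩
  · intro i
    by_cases h : g xs i ≥ 0 ∨ lam' i > 0
    · rw [if_pos h, hzero i (by tauto), mul_zero]
    · rw [if_neg h, zero_mul]
  · intro i
    by_cases h : g xs i ≥ 0
    · rw [hzero i (Or.inr h)]
    · linarith [lt_of_not_ge h]
  · intro i
    by_cases h : lam' i > 0
    · rw [hzero i (Or.inl h), mul_zero]
    · have : lam' i = 0 := le_antisymm (not_lt.mp h) (hlamnn i)
      rw [this, zero_mul]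
end

section
/- With linear g(x) = Gx + d, λ ≥ 0, μ > 0, and x' satisfying the componentwise condition λᵢ > 0 → max(0, λᵢ + 2μgᵢ(x'))> 0 for all i, it holds for every x that ∇L(x, λ', κ') − ∇L(x', λ, κ) = 2μ g(x)ᵀ I_{λ'}(x) G + 2ν h(x)ᵀ H, where λ' = max(0, λ + 2μg(x')), κ' = κ + 2νh(x'), and h(x) = Hx + e. -/
/-- Gradient-difference identity: after the centered update, for every `x`,
`∇L(x,λ',κ') − ∇L(x',λ,κ) = 2μ g(x)ᵀ I_{λ'}(x) G + 2ν h(x)ᵀ H`. -/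
theorem stmt_6 {n m l : ℕ} (c : Fin n → ℝ)
    (G : Matrix (Fin m) (Fin n) ℝ) (d : Fin m → ℝ)
    (H : Matrix (Fin l) (Fin n) ℝ) (e : Fin l → ℝ)
    (mu nu : ℝ) (hmu : mu > 0) (hnu : nu > 0)
    (g : (Fin n → ℝ) → Fin m → ℝ) (hgdef : g = fun x => G.mulVec x + d)
    (h : (Fin n → ℝ) → Fin l → ℝ) (hhdef : h = fun x => H.mulVec x + e)
    (gradL : (Fin n → ℝ) → (Fin m → ℝ) → (Fin l → ℝ) → (Fin n → ℝ))
    (hgradL : gradL = fun x lam kap =>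
      c + Matrix.vecMul
            (fun i => 2 * mu * (if g x i ≥ 0 ∨ lam i > 0 then (1:ℝ) else 0) * g x i + lam i) G
        + Matrix.vecMul (fun j => 2 * nu * h x j + kap j) H)
    (lam : Fin m → ℝ) (hlam : ∀ i, lam i ≥ 0) (kap : Fin l → ℝ)
    (x' : Fin n → ℝ)
    (hcond : ∀ i, lam i > 0 → max 0 (lam i + 2 * mu * g x' i) > 0)
    (lam' : Fin m → ℝ) (hlam' : lam' = fun i => max 0 (lam i + 2 * mu * g x' i))
    (kap' : Fin l → ℝ) (hkap' : kap' = fun j => kap j + 2 * nu * h x' j) :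
    ∀ x : Fin n → ℝ,
      gradL x lam' kap' - gradL x' lam kap =
        Matrix.vecMul
          (fun i => 2 * mu * (if g x i ≥ 0 ∨ lam' i > 0 then (1:ℝ) else 0) * g x i) G
        + Matrix.vecMul (fun j => 2 * nu * h x j) H := by
  intro x
  subst hgradL hkap'
  have key : ((fun i => 2 * mu * (if g x i ≥ 0 ∨ lam' i > 0 then (1:ℝ) else 0) * g x i + lam' i)
      - fun i => 2 * mu * (if g x' i ≥ 0 ∨ lam i > 0 then (1:ℝ) else 0) * g x' i + lam i)
      = fun i => 2 * mu * (if g x i ≥ 0 ∨ lam' i > 0 then (1:ℝ) else 0) * g x i := by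
    funext i
    simp only [Pi.sub_apply]
    have : lam' i - (2 * mu * (if g x' i ≥ 0 ∨ lam i > 0 then (1:ℝ) else 0) * g x' i + lam i)
        = 0 := by
      by_cases hc : g x' i ≥ 0 ∨ lam i > 0
      · have hpos : lam i + 2 * mu * g x' i ≥ 0 := by
          rcases hc with hg | hl
          · nlinarith [hlam i]
          · have := hcond i hl
            rcases max_cases (0:ℝ) (lam i + 2 * mu * g x' i) with ⟨h1, h2⟩ | ⟨h1, h2⟩ <;>
              linarith
        rw [hlam']
        simp only [if_pos hc]
        rw [max_eq_right hpos]; ring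
      · have hn := hc
        push_neg at hn
        have h0 : lam i = 0 := le_antisymm hn.2 (hlam i)
        rw [hlam']
        simp only [if_neg hc]
        have : lam i + 2 * mu * g x' i ≤ 0 := by nlinarith [hn.1]
        rw [max_eq_left this]; simp [h0]
    linarith
  have keyh : ((fun j => 2 * nu * h x j + (fun j => kap j + 2 * nu * h x' j) j)
      - fun j => 2 * nu * h x' j + kap j) = fun j => 2 * nu * h x j := by
    funext j; simp only [Pi.sub_apply]; ring
  rw [← key, ← keyh, Matrix.sub_vecMul, Matrix.sub_vecMul]
  funext k
  simp only [Pi.add_apply, Pi.sub_apply]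
  ring
end

section
/- Let μ, ν > 0 and consider the equality-constraint augmented Lagrangian L(x,κ) = f(x) + ν‖h(x)‖² + κᵀh(x) with affine h(x) = Hx + e and f(x) = cᵀx. If x' minimizes L(·,κ) (equivalently ∇L(x',κ) = c + (2νh(x') + κ)ᵀH = 0), κ' = κ + 2νh(x'), and x* satisfies ∇L(x*,κ') = 0, and H has linearly independent rows, then h(x*) = 0 and (x*, κ') satisfies stationarity c + κ'ᵀH = 0; i.e., KKT holds after one centered update. -/
/-- Equality-only specialization of Theorem 1: one centered update yields a
KKT point. -/
theorem stmt_14 {n l : ℕ} (c : Fin n → ℝ)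
    (H : Matrix (Fin l) (Fin n) ℝ) (e : Fin l → ℝ)
    (nu : ℝ) (hnu : nu > 0)
    (h : (Fin n → ℝ) → Fin l → ℝ) (hh : h = fun x => H.mulVec x + e)
    (kap : Fin l → ℝ) (x' xs : Fin n → ℝ)
    (hgrad' : c + Matrix.vecMul (fun j => 2 * nu * h x' j + kap j) H = 0)
    (kap' : Fin l → ℝ) (hkap' : kap' = fun j => kap j + 2 * nu * h x' j)
    (hgrads : c + Matrix.vecMul (fun j => 2 * nu * h xs j + kap' j) H = 0)
    (hH : LinearIndependent ℝ H) :
    h xs = 0 ∧ c + Matrix.vecMul kap' H = 0 := by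
  have hstat : c + Matrix.vecMul kap' H = 0 := by
    rw [hkap']
    convert hgrad' using 3
    funext j
    ring
  have hsplit : (fun j => 2 * nu * h xs j + kap' j) =
      (fun j => 2 * nu * h xs j) + kap' := rfl
  rw [hsplit, Matrix.add_vecMul] at hgrads
  have hzero : Matrix.vecMul (fun j => 2 * nu * h xs j) H = 0 := by
    have := hgrads
    rw [← add_assoc] at this
    -- this : (c + vecMul (2ν h xs) H) + vecMul kap' H = 0
    have h2 : c + Matrix.vecMul (fun j => 2 * nu * h xs j) H + Matrix.vecMul kap' H
        = c + Matrix.vecMul kap' H + Matrix.vecMul (fun j => 2 * nu * h xs j) H := by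
      abel
    rw [h2, hstat, zero_add] at this
    exact this
  have hsum : ∑ i, (2 * nu * h xs i) • H i = 0 := by
    rw [← hzero]
    funext j
    simp [Matrix.vecMul, dotProduct, Finset.sum_apply]
  have hall := Fintype.linearIndependent_iff.mp hH (fun i => 2 * nu * h xs i) hsum
  have hzs : h xs = 0 := by
    funext i
    have := hall i
    have h2 : (2 : ℝ) * nu ≠ 0 := by positivity
    rcases mul_eq_zero.mp this with h' | h'
    · exact absurd h' h2
    · simpa using h'
  exact ⟨hzs, hstat⟩
end

section
/- Any-time update theorem (equality case): let h(x) = Hx + e be affine, f(x) = cᵀx, ν > 0, and L(x,κ) = cᵀx + ν‖h(x)‖² + κᵀh(x). Let (x', κ) be arbitrary, and suppose κ' ∈ ℝ^l satisfies (κ' − (κ + 2νh(x')))ᵀH + ∇L(x',κ) = 0 (the any-time residual is exactly zero). If x* satisfies ∇L(x*, κ') = 0 and H has linearly independent rows, then h(x*) = 0 and c + κ'ᵀH = 0 (KKT holds at x*), regardless of whether x' was a minimizer of L(·,κ). -/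
/-- Any-time update theorem (equality case): an exact any-time update from an
arbitrary point `x'` yields, after one centering, a KKT point. -/
theorem stmt_16 {n l : ℕ} (c : Fin n → ℝ)
    (H : Matrix (Fin l) (Fin n) ℝ) (e : Fin l → ℝ)
    (nu : ℝ) (hnu : nu > 0)
    (h : (Fin n → ℝ) → Fin l → ℝ) (hh : h = fun x => H.mulVec x + e)
    (gradL : (Fin n → ℝ) → (Fin l → ℝ) → Fin n → ℝ)
    (hgradL : gradL = fun x kap => c + Matrix.vecMul (fun j => 2 * nu * h x j + kap j) H)
    (x' xs : Fin n → ℝ) (kap kap' : Fin l → ℝ)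
    (hres : Matrix.vecMul (fun j => kap' j - (kap j + 2 * nu * h x' j)) H
              + gradL x' kap = 0)
    (hgrads : gradL xs kap' = 0)
    (hH : LinearIndependent ℝ H) :
    h xs = 0 ∧ c + Matrix.vecMul kap' H = 0 := by
  subst hgradL
  simp only at hres hgrads
  have e1 : (fun j => kap' j - (kap j + 2 * nu * h x' j))
      = kap' - (fun j => 2 * nu * h x' j + kap j) := by funext j; simp; ring
  have key : c + Matrix.vecMul kap' H = 0 := by
    rw [e1, Matrix.sub_vecMul] at hres
    rw [← hres]; abel
  have e2 : (fun j => 2 * nu * h xs j + kap' j)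
      = (fun j => 2 * nu * h xs j) + kap' := rfl
  rw [e2, Matrix.add_vecMul] at hgrads
  have h2 : Matrix.vecMul (fun j => 2 * nu * h xs j) H = 0 := by
    have : Matrix.vecMul (fun j => 2 * nu * h xs j) H + (c + Matrix.vecMul kap' H) = 0 := by
      rw [← hgrads]; abel
    rwa [key, add_zero] at this
  have hzero := Fintype.linearIndependent_iff.mp hH (fun j => 2 * nu * h xs j) ?_
  · refine ⟨funext fun j => ?_, key⟩
    have := hzero j
    have : h xs j = 0 := by nlinarith
    simpa using this
  · rw [← h2]; funext i; simp [Matrix.vecMul, dotProduct, mul_comm]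
end

section
/- Suppose f: ℝ^n → ℝ is convex differentiable, g(x) = Gx + d, and λ ≥ 0 is fixed. Then the augmented Lagrangian L(x,λ) = f(x) + Σᵢ ([λᵢ > 0 ∨ gᵢ(x) ≥ 0] μ gᵢ(x)² + λᵢ gᵢ(x)) is convex in x. -/
/-! For `λᵢ > 0` the `i`-th penalty term is the convex quadratic `μ t² + λᵢ t` evaluated at
`t = gᵢ(x)`; for `λᵢ = 0` it is `μ max(t, 0)²`, the square of a nonnegative convex function.
Composing with the affine map `x ↦ gᵢ(x)` and summing preserves convexity. -/

open Set Matrix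

theorem ConvexOn.sum {𝕜 E β ι : Type*} [Semiring 𝕜] [PartialOrder 𝕜]
    [AddCommMonoid E] [AddCommMonoid β] [PartialOrder β] [IsOrderedAddMonoid β]
    [SMul 𝕜 E] [Module 𝕜 β] {s : Set E} (hs : Convex 𝕜 s) {t : Finset ι} {f : ι → E → β}
    (hf : ∀ i ∈ t, ConvexOn 𝕜 s (f i)) : ConvexOn 𝕜 s fun x => ∑ i ∈ t, f i x := by
  classical
  induction t using Finset.induction_on with
  | empty => simpa using convexOn_const 0 hs
  | insert j t hj ih =>
    simp only [Finset.sum_insert hj]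
    exact (hf j (t.mem_insert_self j)).add (ih fun i hi => hf i (Finset.mem_insert_of_mem hi))

theorem convexOn_augmentedPenalty {μ l : ℝ} (hμ : 0 ≤ μ) (hl : 0 ≤ l) :
    ConvexOn ℝ univ fun t : ℝ => (if l > 0 ∨ t ≥ 0 then (1 : ℝ) else 0) * μ * t ^ 2 + l * t := by
  rcases hl.lt_or_eq with hl | rfl
  · refine ((even_two.convexOn_pow.smul hμ).add ((convexOn_id convex_univ).smul hl.le)).congr
      fun t _ => ?_
    simp [hl]
  · refine (((convexOn_id convex_univ).sup (convexOn_const 0 convex_univ)).pow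
      (fun t _ => le_sup_right) 2).smul hμ |>.congr fun t _ => ?_
    by_cases ht : 0 ≤ t
    · simp [ht]
    · simp [ht, (not_le.mp ht).le]

theorem ConvexOn.comp_mulVec_add_apply {𝕜 β m n : Type*} [Field 𝕜] [LinearOrder 𝕜]
    [AddCommMonoid β] [PartialOrder β] [SMul 𝕜 β] [Fintype n] {φ : 𝕜 → β}
    (hφ : ConvexOn 𝕜 univ φ) (G : Matrix m n 𝕜) (d : m → 𝕜) (i : m) :
    ConvexOn 𝕜 univ fun x => φ ((G *ᵥ x + d) i) := by
  have h := hφ.comp_affineMap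
    ((LinearMap.proj i ∘ₗ G.mulVecLin).toAffineMap + AffineMap.const 𝕜 (n → 𝕜) (d i))
  rw [preimage_univ] at h
  exact h.congr fun x _ => rfl

theorem stmt_19_general {n m : ℕ} (f : (Fin n → ℝ) → ℝ)
    (hfc : ConvexOn ℝ Set.univ f)
    (G : Matrix (Fin m) (Fin n) ℝ) (d : Fin m → ℝ)
    (g : (Fin n → ℝ) → Fin m → ℝ) (hg : g = fun x => G.mulVec x + d)
    (mu : ℝ) (hmu : mu > 0)
    (lam : Fin m → ℝ) (hlam : ∀ i, lam i ≥ 0) :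
    ConvexOn ℝ Set.univ (fun x : Fin n → ℝ =>
      f x + ∑ i, ((if lam i > 0 ∨ g x i ≥ 0 then (1:ℝ) else 0) * mu * (g x i) ^ 2
                   + lam i * g x i)) := by
  subst hg
  exact hfc.add <| ConvexOn.sum convex_univ fun i _ =>
    (convexOn_augmentedPenalty hmu.le (hlam i)).comp_mulVec_add_apply G d i

/-- For convex differentiable `f`, affine `g`, `λ ≥ 0` and `μ > 0`, the
augmented Lagrangian `L(·,λ)` is convex. -/
theorem stmt_19 {n m : ℕ} (f : (Fin n → ℝ) → ℝ)
    (hfc : ConvexOn ℝ Set.univ f) (hfd : Differentiable ℝ f)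
    (G : Matrix (Fin m) (Fin n) ℝ) (d : Fin m → ℝ)
    (g : (Fin n → ℝ) → Fin m → ℝ) (hg : g = fun x => G.mulVec x + d)
    (mu : ℝ) (hmu : mu > 0)
    (lam : Fin m → ℝ) (hlam : ∀ i, lam i ≥ 0) :
    ConvexOn ℝ Set.univ (fun x : Fin n → ℝ =>
      f x + ∑ i, ((if lam i > 0 ∨ g x i ≥ 0 then (1:ℝ) else 0) * mu * (g x i) ^ 2
                   + lam i * g x i)) :=
  stmt_19_general f hfc G d g hg mu hmu lam hlam
end
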